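/- arXiv:1302.0591 — 2 statements merged into one kernel-verified Lean document; each statement's English description precedes it below -/
import Mathlib

section
/- Let F : ℝ × ℝ → ℝ with F(G(t), t) = 0 for all t, where G, φ : ℝ → ℝ are C¹, f : ℝ → ℝ is nowhere zero, and H' = 1/f. If q : ℝ² → ℝ is differentiable and satisfies H(x)·G'(q(x,y)) + y = φ'(q(x,y)) for all (x,y), then u(x,y) = H(x)·G(q(x,y)) + y·q(x,y) − φ(q(x,y)) satisfies F(f(x)·u_x(x,y), u_y(x,y)) = 0 for all (x,y). -/
/-!
Along each coordinate line, `u` has the form `A s * G (p s) + B s * p s - φ (p s)` with `p = q`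
restricted to the line, and the hypothesis on `q` says that `p s` is a critical point of
`r ↦ A s * G r + B s * r - φ r`. By the envelope principle the chain-rule terms through `q`
cancel, so `u_x = G (q) / f` and `u_y = q`; hence `(f u_x, u_y) = (G t, t)` with `t = q (x, y)`.
-/

theorem HasDerivAt.envelope {A B p G φ : ℝ → ℝ} {A' B' p' G' φ' x : ℝ}
    (hA : HasDerivAt A A' x) (hB : HasDerivAt B B' x) (hp : HasDerivAt p p' x)
    (hG : HasDerivAt G G' (p x)) (hφ : HasDerivAt φ φ' (p x))
    (hcrit : A x * G' + B x = φ') :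
    HasDerivAt (fun s => A s * G (p s) + B s * p s - φ (p s)) (A' * G (p x) + B' * p x) x := by
  refine ((hA.mul (hG.comp x hp)).add (hB.mul hp) |>.sub (hφ.comp x hp)).congr_deriv ?_
  rw [← hcrit, Function.comp_apply]
  ring

theorem stmt_5 (F : ℝ × ℝ → ℝ) (f G φ H : ℝ → ℝ)
    (hG : ContDiff ℝ 1 G) (hφ : ContDiff ℝ 1 φ)
    (hFG : ∀ t : ℝ, F (G t, t) = 0)
    (hf : ∀ x : ℝ, f x ≠ 0)
    (hH : ∀ x : ℝ, HasDerivAt H (1 / f x) x)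
    (q : ℝ × ℝ → ℝ) (hq : Differentiable ℝ q)
    (hcond : ∀ x y : ℝ, H x * deriv G (q (x, y)) + y = deriv φ (q (x, y)))
    (u : ℝ × ℝ → ℝ)
    (hu : ∀ x y : ℝ, u (x, y) = H x * G (q (x, y)) + y * q (x, y) - φ (q (x, y))) :
    ∀ x y : ℝ,
      F (f x * deriv (fun x' => u (x', y)) x, deriv (fun y' => u (x, y')) y) = 0 := by
  intro x y
  have hGq := (hG.differentiable one_ne_zero (q (x, y))).hasDerivAt
  have hφq := (hφ.differentiable one_ne_zero (q (x, y))).hasDerivAt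
  have hqx : DifferentiableAt ℝ (fun x' => q (x', y)) x :=
    (hq _).comp x (differentiableAt_id.prodMk (differentiableAt_const y))
  have hqy : DifferentiableAt ℝ (fun y' => q (x, y')) y :=
    (hq _).comp y ((differentiableAt_const x).prodMk differentiableAt_id)
  have hux : deriv (fun x' => u (x', y)) x = 1 / f x * G (q (x, y)) := by
    simp only [hu]
    simpa using ((hH x).envelope (hasDerivAt_const x y) hqx.hasDerivAt hGq hφq (hcond x y)).deriv
  have huy : deriv (fun y' => u (x, y')) y = q (x, y) := by
    simp only [hu]
    simpa using ((hasDerivAt_const y (H x)).envelope (hasDerivAt_id y) hqy.hasDerivAt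
      hGq hφq (hcond x y)).deriv
  rw [hux, huy, ← mul_assoc, mul_one_div_cancel (hf x), one_mul]
  exact hFG _
end

section
/- Let V, a : ℝ → ℝ be continuously differentiable with a(x) > 0 for all x, and let F : ℝ × ℝ → ℝ be continuously differentiable. Let q : ℝ × ℝ → ℝ be differentiable, and suppose that for all (x,t): q(x,t) − V(x) > 0, the partial derivative ∂F/∂q(x, q(x,t)) = t + x/(2·√(a(x)·(q(x,t) − V(x)))), and ∂F/∂x(x, q(x,t)) = x·(a'(x)·V(x) − a(x)·V'(x) − q(x,t)·a'(x)) / (2·a(x)·√(a(x)·(q(x,t) − V(x)))). Define S(x,t) = x·√((q(x,t) − V(x))/a(x)) + q(x,t)·t − F(x, q(x,t)). Then S satisfies the Hamilton–Jacobi equation a(x)·(S_x)² + V(x) = S_t at every point, with S_x(x,t) = √((q(x,t) − V(x))/a(x)) and S_t(x,t) = q(x,t). -/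
/-!
Along any differentiable curve, the chain rule together with the two prescribed partial
derivatives of `F` makes every term containing the derivative of `q` cancel, so that
`dS = √((q - V) / a) dx + q dt`. The coordinate curves give `S_x` and `S_t`, and
`a S_x² + V = q` is then immediate.
-/

open Real

theorem hasDerivAt_apply_prodMk {𝕜 E : Type*} [NontriviallyNormedField 𝕜]
    [NormedAddCommGroup E] [NormedSpace 𝕜 E] {F : 𝕜 × 𝕜 → E} {u v : 𝕜 → 𝕜} {u' v' x : 𝕜}
    (hF : DifferentiableAt 𝕜 F (u x, v x)) (hu : HasDerivAt u u' x) (hv : HasDerivAt v v' x) :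
    HasDerivAt (fun y => F (u y, v y))
      (u' • deriv (fun s => F (s, v x)) (u x) + v' • deriv (fun s => F (u x, s)) (v x)) x := by
  have hslice₁ : HasDerivAt (fun s => F (s, v x)) (fderiv 𝕜 F (u x, v x) (1, 0)) (u x) :=
    hF.hasFDerivAt.comp_hasDerivAt (u x) ((hasDerivAt_id _).prodMk (hasDerivAt_const _ _))
  have hslice₂ : HasDerivAt (fun s => F (u x, s)) (fderiv 𝕜 F (u x, v x) (0, 1)) (v x) :=
    hF.hasFDerivAt.comp_hasDerivAt (v x) ((hasDerivAt_const _ _).prodMk (hasDerivAt_id _))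
  have hsplit : ((u', v') : 𝕜 × 𝕜) = u' • (1, 0) + v' • (0, 1) := by simp
  rw [hslice₁.deriv, hslice₂.deriv, ← map_smul, ← map_smul, ← map_add, ← hsplit]
  exact hF.hasFDerivAt.comp_hasDerivAt x (hu.prodMk hv)

theorem Real.sqrt_mul_eq_mul_sqrt_div {a : ℝ} (ha : 0 < a) (b : ℝ) : √(a * b) = a * √(b / a) := by
  have hsqrt_pos : 0 < √a := sqrt_pos.2 ha
  rw [sqrt_mul ha.le, sqrt_div' b ha.le]
  field_simp
  rw [sq_sqrt ha.le, mul_comm]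

noncomputable def hjAction (V a : ℝ → ℝ) (F q : ℝ × ℝ → ℝ) (p : ℝ × ℝ) : ℝ :=
  p.1 * √((q p - V p.1) / a p.1) + q p * p.2 - F (p.1, q p)

theorem hasDerivAt_hjAction_comp {V a : ℝ → ℝ} {F q : ℝ × ℝ → ℝ} {p : ℝ × ℝ}
    (hV : DifferentiableAt ℝ V p.1) (ha : DifferentiableAt ℝ a p.1)
    (hF : DifferentiableAt ℝ F (p.1, q p)) (hq : DifferentiableAt ℝ q p)
    (hap : 0 < a p.1) (hqV : 0 < q p - V p.1)
    (hFq : deriv (fun s => F (p.1, s)) (q p) = p.2 + p.1 / (2 * √(a p.1 * (q p - V p.1))))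
    (hFx : deriv (fun x' => F (x', q p)) p.1
        = p.1 * (deriv a p.1 * V p.1 - a p.1 * deriv V p.1 - q p * deriv a p.1)
            / (2 * a p.1 * √(a p.1 * (q p - V p.1))))
    {γ : ℝ → ℝ × ℝ} {γ' : ℝ × ℝ} {τ : ℝ} (hγ : HasDerivAt γ γ' τ) (hp : γ τ = p) :
    HasDerivAt (fun σ => hjAction V a F q (γ σ))
      (γ'.1 * √((q p - V p.1) / a p.1) + γ'.2 * q p) τ := by
  subst hp
  have hX : HasDerivAt (fun σ => (γ σ).1) γ'.1 τ := hasFDerivAt_fst.comp_hasDerivAt (f := γ) τ hγ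
  have hT : HasDerivAt (fun σ => (γ σ).2) γ'.2 τ := hasFDerivAt_snd.comp_hasDerivAt (f := γ) τ hγ
  have hQ : HasDerivAt (fun σ => q (γ σ)) (fderiv ℝ q (γ τ) γ') τ :=
    hq.hasFDerivAt.comp_hasDerivAt τ hγ
  have hW := ((hQ.sub (hV.hasDerivAt.comp τ hX)).div (ha.hasDerivAt.comp τ hX) hap.ne').sqrt
    (div_pos hqV hap).ne'
  have hFγ := hasDerivAt_apply_prodMk hF hX hQ
  rw [hFq, hFx] at hFγ
  refine (((hX.mul hW).add (hQ.mul hT)).sub hFγ).congr_deriv ?_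
  have hsqrt_pos : 0 < √((q (γ τ) - V (γ τ).1) / a (γ τ).1) := sqrt_pos.2 (div_pos hqV hap)
  simp only [smul_eq_mul, Function.comp_apply, Pi.sub_apply, Pi.div_apply,
    sqrt_mul_eq_mul_sqrt_div hap]
  field_simp
  ring

theorem stmt_15 (V a : ℝ → ℝ) (hV : ContDiff ℝ 1 V) (ha : ContDiff ℝ 1 a)
    (hapos : ∀ x : ℝ, 0 < a x)
    (F : ℝ × ℝ → ℝ) (hF : ContDiff ℝ 1 F)
    (q : ℝ × ℝ → ℝ) (hq : Differentiable ℝ q)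
    (hqV : ∀ x t : ℝ, 0 < q (x, t) - V x)
    (hFq : ∀ x t : ℝ,
      deriv (fun s => F (x, s)) (q (x, t))
        = t + x / (2 * Real.sqrt (a x * (q (x, t) - V x))))
    (hFx : ∀ x t : ℝ,
      deriv (fun x' => F (x', q (x, t))) x
        = x * (deriv a x * V x - a x * deriv V x - q (x, t) * deriv a x)
            / (2 * a x * Real.sqrt (a x * (q (x, t) - V x))))
    (S : ℝ × ℝ → ℝ)
    (hS : ∀ x t : ℝ,
      S (x, t) = x * Real.sqrt ((q (x, t) - V x) / a x) + q (x, t) * t - F (x, q (x, t))) :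
    ∀ x t : ℝ,
      deriv (fun x' => S (x', t)) x = Real.sqrt ((q (x, t) - V x) / a x) ∧
      deriv (fun t' => S (x, t')) t = q (x, t) ∧
      a x * (deriv (fun x' => S (x', t)) x) ^ 2 + V x = deriv (fun t' => S (x, t')) t := by
  intro x t
  obtain rfl : S = hjAction V a F q := funext fun p => hS p.1 p.2
  have hdS := @hasDerivAt_hjAction_comp V a F q (x, t) (hV.differentiable one_ne_zero x)
    (ha.differentiable one_ne_zero x) (hF.differentiable one_ne_zero _) (hq _) (hapos x)
    (hqV x t) (hFq x t) (hFx x t)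
  have hSx : deriv (fun x' => hjAction V a F q (x', t)) x = √((q (x, t) - V x) / a x) := by
    simpa using (hdS ((hasDerivAt_id x).prodMk (hasDerivAt_const x t)) rfl).deriv
  have hSt : deriv (fun t' => hjAction V a F q (x, t')) t = q (x, t) := by
    simpa using (hdS ((hasDerivAt_const t x).prodMk (hasDerivAt_id t)) rfl).deriv
  refine ⟨hSx, hSt, ?_⟩
  rw [hSx, hSt, sq_sqrt (div_pos (hqV x t) (hapos x)).le, mul_div_cancel₀ _ (hapos x).ne',
    sub_add_cancel]
end
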